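/- Let Ω be the closed unit disk in ℝ², let λ > 0, and for 0 ≤ α ≤ 1 let ν_α := (1−α)·(dx/π restricted to Ω) + α·(dσ/(2π) on ∂Ω). Define K_b(m, ν_α) := sup_{x ∈ Ω} Σ_{j=−m}^{m} |b_{λ,j}(x)|² / ‖b_{λ,j}‖²_{L²(ν_α)}, which equals the quantity K for the (2m+1)-dimensional space V_m^b = span{b_{λ,j} : −m ≤ j ≤ m} since the b_{λ,j} are ν_α-orthogonal. Then for the uniform measure (α = 0): for every constant c₁ < 1/4 there exist a constant c₀ (depending on c₁ and λ) and an integer m₀ such that for all m ≥ m₀, K_b(m, ν_0) ≥ c₀ + c₁ m². -/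

import Mathlib

open MeasureTheory Metric

/-- Bessel function of the first kind of nonnegative integer order. -/
noncomputable def besselJnat (n : ℕ) (x : ℝ) : ℝ :=
  ∑' k : ℕ, ((-1 : ℝ) ^ k / ((Nat.factorial k : ℝ) * (Nat.factorial (n + k) : ℝ))) *
    (x / 2) ^ (n + 2 * k)

/-- Bessel function of the first kind of integer order, with `J_{-n} = (-1)^n J_n`. -/
noncomputable def besselJ (n : ℤ) (x : ℝ) : ℝ :=
  if 0 ≤ n then besselJnat n.toNat x else (-1 : ℝ) ^ n.natAbs * besselJnat n.natAbs x

/-- The Fourier-Bessel function `b_{λ,j}(x) = e^{ijθ} J_j(λ r)` on `ℝ² ≃ ℂ`. -/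
noncomputable def fourierBessel (lam : ℝ) (j : ℤ) (z : ℂ) : ℂ :=
  Complex.exp (Complex.I * j * z.arg) * besselJ j (lam * ‖z‖)

/-- Normalized uniform measure `dx/π` on the closed unit disk. -/
noncomputable def unifDisk : Measure ℂ :=
  (ENNReal.ofReal Real.pi)⁻¹ • (volume.restrict (closedBall (0 : ℂ) 1))

/-- Normalized arc-length measure `dσ/(2π)` on the unit circle. -/
noncomputable def circleUnif : Measure ℂ :=
  (ENNReal.ofReal (2 * Real.pi))⁻¹ •
    Measure.map (fun θ : ℝ => Complex.exp (θ * Complex.I))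
      (volume.restrict (Set.Ioc (0 : ℝ) (2 * Real.pi)))

/-- The mixed measure `ν_α = (1-α) dx/π + α dσ/(2π)`. -/
noncomputable def nuAlpha (a : ℝ) : Measure ℂ :=
  ENNReal.ofReal (1 - a) • unifDisk + ENNReal.ofReal a • circleUnif

/-- Squared `L²(ν)` norm of a function. -/
noncomputable def l2normSq (ν : Measure ℂ) (f : ℂ → ℂ) : ℝ :=
  ∫ z, ‖f z‖ ^ 2 ∂ν

/-- A measure on `ℂ` invariant under every rotation about the origin. -/
def RotationInvariant (ν : Measure ℂ) : Prop :=
  ∀ θ : ℝ, Measure.map (fun z : ℂ => Complex.exp (θ * Complex.I) * z) ν = ν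

/-- Plane wave `e^{i k·x}` with wave vector `k = λ(cos φ, sin φ)`. -/
noncomputable def planeWaveFn (lam phi : ℝ) (z : ℂ) : ℂ :=
  Complex.exp (Complex.I * ((lam * (Real.cos phi * z.re + Real.sin phi * z.im) : ℝ) : ℂ))

/-- Angle `φ_l = 2πl/(2m+1)`. -/
noncomputable def phiAngle (m : ℕ) (l : ℤ) : ℝ := 2 * Real.pi * l / (2 * m + 1)

/-- Discretized plane-wave combination
`b_j^m = (1/((2m+1) i^j)) Σ_{l=-m}^m e^{ijφ_l} e_{k_l}`. -/
noncomputable def pwave (lam : ℝ) (m : ℕ) (j : ℤ) (z : ℂ) : ℂ :=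
  (1 / (((2 * m + 1 : ℕ) : ℂ) * Complex.I ^ j)) *
    ∑ l ∈ Finset.Icc (-(m : ℤ)) (m : ℤ),
      Complex.exp (Complex.I * j * ((phiAngle m l : ℝ) : ℂ)) * planeWaveFn lam (phiAngle m l) z

/-- The quantity `K(V_m^b, ν)` for the Fourier-Bessel space on the unit disk. -/
noncomputable def Kb (lam : ℝ) (ν : Measure ℂ) (m : ℕ) : ℝ :=
  ⨆ z : closedBall (0 : ℂ) 1,
    ∑ j ∈ Finset.Icc (-(m : ℤ)) (m : ℤ),
      ‖fourierBessel lam j ↑z‖ ^ 2 / l2normSq ν (fourierBessel lam j)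

/-- The quantity `K(V_m^e, ν)` for the plane-wave space on the unit disk. -/
noncomputable def Ke (lam : ℝ) (ν : Measure ℂ) (m : ℕ) : ℝ :=
  ⨆ z : closedBall (0 : ℂ) 1,
    ∑ j ∈ Finset.Icc (-(m : ℤ)) (m : ℤ),
      ‖pwave lam m j ↑z‖ ^ 2 / l2normSq ν (pwave lam m j)

/-- Laplacian of a function on `ℝ² ≃ ℂ`. -/
noncomputable def laplacian2 (u : ℂ → ℂ) (z : ℂ) : ℂ :=
  fderiv ℝ (fun w => fderiv ℝ u w 1) z 1 + fderiv ℝ (fun w => fderiv ℝ u w Complex.I) z Complex.I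

/-!
For `n` large compared with `λ²` the series of `J_n(λr)` is dominated by its first term
`a_n rⁿ`, `a_n = (λ/2)ⁿ/n!`: comparing with the positive series `I_n`, the relative error is
`O(λ²/n)`. Hence `‖b_{λ,n}‖² ≈ a_n² ∫ r^{2n} dx/π = a_n²/(n+1)` while `|b_{λ,n}(1)|² ≈ a_n²`, so
the `n`-th term of `Kb` at the point `1` is at least `(n+1)/2` once `n + 1 ≥ 4λ²`. Summing over
`⌈4λ²⌉ ≤ n ≤ m` gives `Kb ≥ m²/4 - ⌈4λ²⌉²`.
-/

/-- The modified Bessel function `I_n`, whose series majorizes that of `J_n` term by term. -/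
noncomputable def besselInat (n : ℕ) (x : ℝ) : ℝ :=
  ∑' k : ℕ, (x / 2) ^ (n + 2 * k) / ((Nat.factorial k : ℝ) * (Nat.factorial (n + k) : ℝ))

section BesselSeries

variable (n : ℕ) (x : ℝ)

noncomputable def besselTerm (k : ℕ) : ℝ :=
  (x / 2) ^ (n + 2 * k) / ((Nat.factorial k : ℝ) * (Nat.factorial (n + k) : ℝ))

lemma besselInat_eq_tsum : besselInat n x = ∑' k, besselTerm n x k := rfl

lemma besselJnat_eq_tsum : besselJnat n x = ∑' k, (-1) ^ k * besselTerm n x k := by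
  simp only [besselJnat, besselTerm]
  congr 1 with k
  ring

lemma besselTerm_zero : besselTerm n x 0 = (x / 2) ^ n / Nat.factorial n := by
  simp [besselTerm]

lemma besselTerm_succ (k : ℕ) :
    besselTerm n x (k + 1) = besselTerm n x k * ((x / 2) ^ 2 / ((k + 1) * (n + k + 1))) := by
  simp only [besselTerm, Nat.factorial_succ, ← add_assoc,
    show n + 2 * (k + 1) = n + 2 * k + 2 by ring]
  push_cast
  field_simp
  ring

variable {x} in
lemma besselTerm_nonneg (hx : 0 ≤ x) (k : ℕ) : 0 ≤ besselTerm n x k := by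
  unfold besselTerm; positivity

lemma abs_besselTerm (k : ℕ) : |besselTerm n x k| = besselTerm n |x| k := by
  simp only [besselTerm, abs_div, abs_pow, abs_mul, Nat.abs_cast, abs_two]

lemma summable_besselTerm : Summable (besselTerm n x) := by
  refine .of_norm_bounded
    ((Real.summable_pow_div_factorial ((|x| / 2) ^ 2)).mul_left ((|x| / 2) ^ n)) fun k => ?_
  have hfac : (Nat.factorial k : ℝ) ≤ Nat.factorial k * Nat.factorial (n + k) :=
    le_mul_of_one_le_right (by positivity) (by exact_mod_cast Nat.factorial_pos _)
  rw [Real.norm_eq_abs, abs_besselTerm, besselTerm, pow_add, pow_mul, mul_div_assoc]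
  gcongr

lemma abs_besselJnat_le_besselInat_abs : |besselJnat n x| ≤ besselInat n |x| := by
  rw [besselJnat_eq_tsum, besselInat_eq_tsum, ← Real.norm_eq_abs]
  refine (norm_tsum_le_tsum_norm ?_).trans_eq (tsum_congr fun k => ?_)
  · simpa using (summable_besselTerm n x).abs
  · rw [norm_mul, norm_pow, norm_neg, norm_one, one_pow, one_mul, Real.norm_eq_abs, abs_besselTerm]

lemma measurable_besselJnat : Measurable (besselJnat n) :=
  Measurable.tsum fun k => by fun_prop

variable {n x}

lemma besselInat_mul_le {r : ℝ} (hx : 0 ≤ x) (hr₀ : 0 ≤ r) (hr₁ : r ≤ 1) :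
    besselInat n (r * x) ≤ r ^ n * besselInat n x := by
  rw [besselInat_eq_tsum, besselInat_eq_tsum, ← (summable_besselTerm n x).tsum_mul_left]
  refine (summable_besselTerm n _).tsum_le_tsum (fun k => ?_)
    ((summable_besselTerm n x).mul_left _)
  have hpow : r ^ (n + 2 * k) ≤ r ^ n := pow_le_pow_of_le_one hr₀ hr₁ (by omega)
  calc besselTerm n (r * x) k = r ^ (n + 2 * k) * besselTerm n x k := by
        simp only [besselTerm, mul_div_assoc, mul_pow]
    _ ≤ r ^ n * besselTerm n x k := by gcongr; exact besselTerm_nonneg n hx k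

/-- The ratio of consecutive terms is at most `q = (x/2)²/(n+1)`. -/
lemma besselTerm_le_geometric (hx : 0 ≤ x) (k : ℕ) :
    besselTerm n x k ≤ besselTerm n x 0 * ((x / 2) ^ 2 / (n + 1)) ^ k := by
  induction k with
  | zero => simp
  | succ k ih =>
    rw [besselTerm_succ, pow_succ _ k, ← mul_assoc]
    refine mul_le_mul ih ?_ (by positivity) (ih.trans' (besselTerm_nonneg n hx k))
    gcongr
    nlinarith [(Nat.cast_nonneg k : (0 : ℝ) ≤ k)]

lemma besselInat_le (hx : 0 ≤ x) (hq : (x / 2) ^ 2 / (n + 1) < 1) :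
    besselInat n x ≤ (x / 2) ^ n / Nat.factorial n / (1 - (x / 2) ^ 2 / (n + 1)) := by
  have hq₀ : 0 ≤ (x / 2) ^ 2 / (n + 1) := by positivity
  rw [besselInat_eq_tsum, div_eq_mul_inv, ← besselTerm_zero, ← tsum_geometric_of_lt_one hq₀ hq,
    ← (summable_geometric_of_lt_one hq₀ hq).tsum_mul_left]
  exact (summable_besselTerm n x).tsum_le_tsum (besselTerm_le_geometric hx)
    ((summable_geometric_of_lt_one hq₀ hq).mul_left _)

/-- The odd terms of `J_n` and `I_n` cancel, and the even ones are nonnegative. -/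
lemma two_mul_le_besselJnat_add_besselInat (hx : 0 ≤ x) :
    2 * ((x / 2) ^ n / Nat.factorial n) ≤ besselJnat n x + besselInat n x := by
  have hJ : Summable fun k => (-1) ^ k * besselTerm n x k := by
    refine .of_norm_bounded (summable_besselTerm n x).abs fun k => ?_
    simp [abs_besselTerm]
  rw [besselJnat_eq_tsum, besselInat_eq_tsum, ← hJ.tsum_add (summable_besselTerm n x),
    ← besselTerm_zero]
  refine ((hJ.add (summable_besselTerm n x)).le_tsum 0 fun k _ => ?_).trans_eq' (by ring)
  rcases neg_one_pow_eq_or ℝ k with h | h <;> rw [h] <;> nlinarith [besselTerm_nonneg n hx k]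

lemma le_besselJnat (hx : 0 ≤ x) (hq : (x / 2) ^ 2 / (n + 1) ≤ 1 / 2) :
    (1 - 2 * ((x / 2) ^ 2 / (n + 1))) * ((x / 2) ^ n / Nat.factorial n) ≤ besselJnat n x := by
  set q := (x / 2) ^ 2 / (n + 1)
  set a := (x / 2) ^ n / Nat.factorial n
  have hq₀ : 0 ≤ q := by positivity
  have ha : 0 ≤ a := by positivity
  have hI : besselInat n x ≤ a / (1 - q) := besselInat_le hx (by linarith)
  have hgeom : a / (1 - q) ≤ a * (1 + 2 * q) := by
    rw [div_le_iff₀ (by linarith)]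
    nlinarith [mul_nonneg ha hq₀, mul_nonneg (mul_nonneg ha hq₀) (by linarith : 0 ≤ 1 / 2 - q)]
  nlinarith [two_mul_le_besselJnat_add_besselInat (n := n) hx]

end BesselSeries

section FourierBessel

variable {lam : ℝ}

lemma norm_fourierBessel (lam : ℝ) (j : ℤ) (z : ℂ) :
    ‖fourierBessel lam j z‖ = |besselJnat j.natAbs (lam * ‖z‖)| := by
  have harg : ‖Complex.exp (Complex.I * j * z.arg)‖ = 1 := by
    simp [Complex.norm_exp]
  rw [fourierBessel, norm_mul, harg, one_mul, Complex.norm_real, Real.norm_eq_abs, besselJ]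
  split_ifs with hj
  · congr 2; omega
  · rw [abs_mul, abs_pow, abs_neg, abs_one, one_pow, one_mul]

lemma measurable_fourierBessel (lam : ℝ) (j : ℤ) : Measurable (fourierBessel lam j) := by
  unfold fourierBessel besselJ
  have := measurable_besselJnat
  split_ifs <;> fun_prop

lemma norm_fourierBessel_le (hlam : 0 ≤ lam) (j : ℤ) {z : ℂ} (hz : ‖z‖ ≤ 1) :
    ‖fourierBessel lam j z‖ ≤ besselInat j.natAbs lam * ‖z‖ ^ j.natAbs := by
  rw [norm_fourierBessel, mul_comm lam, mul_comm (besselInat _ _)]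
  refine (abs_besselJnat_le_besselInat_abs _ _).trans ?_
  rw [abs_of_nonneg (by positivity)]
  exact besselInat_mul_le hlam (norm_nonneg z) hz

lemma le_norm_fourierBessel (hlam : 0 ≤ lam) (n : ℕ) (hq : (lam / 2) ^ 2 / (n + 1) ≤ 1 / 2)
    {z : ℂ} (hz : ‖z‖ ≤ 1) :
    (1 - 2 * ((lam / 2) ^ 2 / (n + 1))) * ((lam / 2) ^ n / Nat.factorial n) * ‖z‖ ^ n ≤
      ‖fourierBessel lam n z‖ := by
  have hz₀ := norm_nonneg z
  have hz₂ : ‖z‖ ^ 2 ≤ 1 := pow_le_one₀ hz₀ hz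
  have hqz : (lam * ‖z‖ / 2) ^ 2 / (n + 1) = ‖z‖ ^ 2 * ((lam / 2) ^ 2 / (n + 1)) := by ring
  have hq₀ : 0 ≤ (lam / 2) ^ 2 / (n + 1) := by positivity
  rw [norm_fourierBessel, Int.natAbs_natCast]
  refine le_trans ?_ ((le_besselJnat (by positivity) ?_).trans (le_abs_self _))
  · rw [hqz, show (lam * ‖z‖ / 2) ^ n = (lam / 2) ^ n * ‖z‖ ^ n by ring, mul_div_right_comm,
      ← mul_assoc]
    gcongr
    nlinarith
  · rw [hqz]; nlinarith

end FourierBessel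

section UniformDisk

lemma ae_mem_closedBall_unifDisk : ∀ᵐ z ∂unifDisk, z ∈ closedBall (0 : ℂ) 1 :=
  Measure.ae_smul_measure (ae_restrict_mem measurableSet_closedBall) _

lemma integral_norm_pow_unifDisk (p : ℕ) : ∫ z, ‖z‖ ^ p ∂unifDisk = 2 / (p + 2) := by
  have hball : closedBall (0 : ℂ) 1 = norm ⁻¹' Set.Iic 1 := by ext; simp
  have hradial : ∫ z in closedBall (0 : ℂ) 1, ‖z‖ ^ p =
      ∫ z : ℂ, (Set.Iic (1 : ℝ)).indicator (· ^ p) ‖z‖ := by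
    rw [← integral_indicator measurableSet_closedBall, hball]
    rfl
  have hvol : volume.real (ball (0 : ℂ) 1) = Real.pi := by
    simp [measureReal_def, Complex.volume_ball]
  have hcone : ∫ r in Set.Ioi (0 : ℝ), r ^ (2 - 1) • (Set.Iic (1 : ℝ)).indicator (· ^ p) r =
      1 / (p + 2) := by
    have hint : (fun r : ℝ => r ^ (2 - 1) • (Set.Iic (1 : ℝ)).indicator (· ^ p) r) =
        (Set.Iic (1 : ℝ)).indicator (· ^ (p + 1)) := by
      ext r
      by_cases hr : r ∈ Set.Iic (1 : ℝ) <;> simp [hr, pow_succ', smul_eq_mul]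
    rw [hint, integral_indicator measurableSet_Iic, Measure.restrict_restrict measurableSet_Iic,
      Set.Iic_inter_Ioi, ← intervalIntegral.integral_of_le zero_le_one, integral_pow]
    norm_num
    ring
  rw [unifDisk, integral_smul_measure, hradial, integral_fun_norm_addHaar,
    Complex.finrank_real_complex, hvol, hcone]
  simp [ENNReal.toReal_inv, Real.pi_pos.le]
  field_simp

lemma integrable_norm_pow_unifDisk (p : ℕ) : Integrable (fun z : ℂ => ‖z‖ ^ p) unifDisk :=
  Integrable.smul_measure (ContinuousOn.integrableOn_compact (isCompact_closedBall 0 1)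
    (continuous_norm.pow p).continuousOn) (by simp [Real.pi_pos])

variable {f : ℂ → ℂ} {c C : ℝ} {n : ℕ}

lemma ae_sq_norm_le_of_norm_le (h : ∀ z ∈ closedBall (0 : ℂ) 1, ‖f z‖ ≤ C * ‖z‖ ^ n) :
    ∀ᵐ z ∂unifDisk, ‖f z‖ ^ 2 ≤ C ^ 2 * ‖z‖ ^ (2 * n) := by
  filter_upwards [ae_mem_closedBall_unifDisk] with z hz
  calc ‖f z‖ ^ 2 ≤ (C * ‖z‖ ^ n) ^ 2 := pow_le_pow_left₀ (norm_nonneg _) (h z hz) 2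
    _ = C ^ 2 * ‖z‖ ^ (2 * n) := by ring

lemma mul_integral_norm_pow_unifDisk (c : ℝ) (n : ℕ) :
    (n + 1) * ∫ z, c * ‖z‖ ^ (2 * n) ∂unifDisk = c := by
  rw [integral_const_mul, integral_norm_pow_unifDisk]
  push_cast
  field_simp

lemma l2normSq_unifDisk_le (h : ∀ z ∈ closedBall (0 : ℂ) 1, ‖f z‖ ≤ C * ‖z‖ ^ n) :
    (n + 1) * l2normSq unifDisk f ≤ C ^ 2 := by
  have hmono : l2normSq unifDisk f ≤ ∫ z, C ^ 2 * ‖z‖ ^ (2 * n) ∂unifDisk :=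
    integral_mono_of_nonneg (ae_of_all _ fun z => by positivity)
      ((integrable_norm_pow_unifDisk _).const_mul _) (ae_sq_norm_le_of_norm_le h)
  calc (n + 1) * l2normSq unifDisk f ≤ (n + 1) * ∫ z, C ^ 2 * ‖z‖ ^ (2 * n) ∂unifDisk := by
        gcongr
    _ = C ^ 2 := mul_integral_norm_pow_unifDisk _ n

lemma le_l2normSq_unifDisk (hf : AEStronglyMeasurable f unifDisk) (hc : 0 ≤ c)
    (h : ∀ z ∈ closedBall (0 : ℂ) 1, c * ‖z‖ ^ n ≤ ‖f z‖ ∧ ‖f z‖ ≤ C * ‖z‖ ^ n) :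
    c ^ 2 ≤ (n + 1) * l2normSq unifDisk f := by
  have hint : Integrable (fun z => ‖f z‖ ^ 2) unifDisk :=
    ((integrable_norm_pow_unifDisk _).const_mul _).mono' (hf.norm.pow 2)
      (by simpa using ae_sq_norm_le_of_norm_le fun z hz => (h z hz).2)
  have hmono : ∫ z, c ^ 2 * ‖z‖ ^ (2 * n) ∂unifDisk ≤ l2normSq unifDisk f := by
    refine integral_mono_of_nonneg (ae_of_all _ fun z => by positivity) hint ?_
    filter_upwards [ae_mem_closedBall_unifDisk] with z hz
    calc c ^ 2 * ‖z‖ ^ (2 * n) = (c * ‖z‖ ^ n) ^ 2 := by ring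
      _ ≤ ‖f z‖ ^ 2 := pow_le_pow_left₀ (by positivity) (h z hz).1 2
  calc c ^ 2 = (n + 1) * ∫ z, c ^ 2 * ‖z‖ ^ (2 * n) ∂unifDisk :=
        (mul_integral_norm_pow_unifDisk _ n).symm
    _ ≤ (n + 1) * l2normSq unifDisk f := by gcongr

end UniformDisk

/-- For orders `n ≥ 4λ² - 1`, `b_{λ,n}` is close to `(λ/2)^n/n! · r^n e^{inθ}`, whose value at
`1` has squared modulus `n + 1` times its squared norm. -/
lemma half_succ_le_norm_sq_div_l2normSq {lam : ℝ} (hlam : 0 < lam) (n : ℕ)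
    (hn : 4 * lam ^ 2 ≤ n + 1) :
    ((n : ℝ) + 1) / 2 ≤
      ‖fourierBessel lam n 1‖ ^ 2 / l2normSq unifDisk (fourierBessel lam n) := by
  set q := (lam / 2) ^ 2 / (n + 1)
  set a := (lam / 2) ^ n / Nat.factorial n
  set N := l2normSq unifDisk (fourierBessel lam n)
  have hq : q ≤ 1 / 16 := by
    rw [div_le_iff₀ (by positivity)]; linarith
  have ha : 0 < a := by positivity
  have hca : 0 ≤ (1 - 2 * q) * a := mul_nonneg (by linarith) ha.le
  have hlower : ∀ z ∈ closedBall (0 : ℂ) 1, (1 - 2 * q) * a * ‖z‖ ^ n ≤ ‖fourierBessel lam n z‖ :=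
    fun z hz => le_norm_fourierBessel hlam.le n (by linarith) (mem_closedBall_zero_iff.1 hz)
  have hupper : ∀ z ∈ closedBall (0 : ℂ) 1,
      ‖fourierBessel lam n z‖ ≤ besselInat n lam * ‖z‖ ^ n := fun z hz => by
    simpa using norm_fourierBessel_le hlam.le n (mem_closedBall_zero_iff.1 hz)
  have hN_le : (n + 1) * N ≤ besselInat n lam ^ 2 := l2normSq_unifDisk_le hupper
  have hN_ge : ((1 - 2 * q) * a) ^ 2 ≤ (n + 1) * N :=
    le_l2normSq_unifDisk (measurable_fourierBessel lam n).aestronglyMeasurable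
      hca fun z hz => ⟨hlower z hz, hupper z hz⟩
  have hI : besselInat n lam ≤ 16 / 15 * a := by
    refine (besselInat_le hlam.le (by linarith)).trans ?_
    rw [div_le_iff₀ (by linarith)]
    nlinarith
  have hI₀ : 0 ≤ besselInat n lam := tsum_nonneg (besselTerm_nonneg n hlam.le)
  have hval : (7 / 8 * a) ^ 2 ≤ ‖fourierBessel lam n 1‖ ^ 2 := by
    refine pow_le_pow_left₀ (by positivity) ((le_trans ?_ (hlower 1 (by simp)))) 2
    rw [norm_one, one_pow, mul_one]
    gcongr
    linarith
  have hN : 0 < N := by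
    have : 0 < ((1 - 2 * q) * a) ^ 2 := pow_pos (mul_pos (by linarith) ha) 2
    nlinarith
  rw [le_div_iff₀ hN]
  calc ((n : ℝ) + 1) / 2 * N ≤ besselInat n lam ^ 2 / 2 := by linarith
    _ ≤ (16 / 15 * a) ^ 2 / 2 := by gcongr
    _ ≤ (7 / 8 * a) ^ 2 := by nlinarith
    _ ≤ _ := hval

/-- `Kb` is a genuine supremum, not the junk value of an unbounded `⨆`, because
`|b_{λ,j}| ≤ I_{|j|}(λ)` on the disk. -/
lemma sum_le_Kb {lam : ℝ} (hlam : 0 ≤ lam) (ν : Measure ℂ) (m : ℕ) {s : Finset ℤ}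
    (hs : s ⊆ Finset.Icc (-(m : ℤ)) m) {z : ℂ} (hz : z ∈ closedBall (0 : ℂ) 1) :
    ∑ j ∈ s, ‖fourierBessel lam j z‖ ^ 2 / l2normSq ν (fourierBessel lam j) ≤ Kb lam ν m := by
  have hN : ∀ j, 0 ≤ l2normSq ν (fourierBessel lam j) := fun _ =>
    integral_nonneg fun _ => by positivity
  have hbdd : BddAbove (Set.range fun w : closedBall (0 : ℂ) 1 =>
      ∑ j ∈ Finset.Icc (-(m : ℤ)) m,
        ‖fourierBessel lam j w‖ ^ 2 / l2normSq ν (fourierBessel lam j)) := by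
    refine ⟨∑ j ∈ Finset.Icc (-(m : ℤ)) m,
      besselInat j.natAbs lam ^ 2 / l2normSq ν (fourierBessel lam j), ?_⟩
    rintro _ ⟨w, rfl⟩
    refine Finset.sum_le_sum fun j _ => div_le_div_of_nonneg_right ?_ (hN j)
    have hw : ‖(w : ℂ)‖ ≤ 1 := mem_closedBall_zero_iff.1 w.2
    refine pow_le_pow_left₀ (norm_nonneg _) ((norm_fourierBessel_le hlam j hw).trans ?_) 2
    exact mul_le_of_le_one_right (tsum_nonneg (besselTerm_nonneg _ hlam))
      (pow_le_one₀ (norm_nonneg _) hw)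
  refine (Finset.sum_le_sum_of_subset_of_nonneg hs fun j _ _ => ?_).trans (le_ciSup hbdd ⟨z, hz⟩)
  exact div_nonneg (by positivity) (hN j)

lemma sq_div_four_sub_sq_le_sum_Icc {J₀ m : ℕ} (h : J₀ ≤ m) :
    (m : ℝ) ^ 2 / 4 - (J₀ : ℝ) ^ 2 ≤ ∑ n ∈ Finset.Icc J₀ m, ((n : ℝ) + 1) / 2 := by
  induction m, h using Nat.le_induction with
  | base =>
    rw [Finset.Icc_self, Finset.sum_singleton]
    nlinarith [(Nat.cast_nonneg J₀ : (0 : ℝ) ≤ J₀)]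
  | succ m hm ih =>
    rw [Finset.sum_Icc_succ_top (by omega)]
    push_cast
    nlinarith

/-- For the Fourier-Bessel space `V_m^b` and the uniform measure `ν₀` on the
unit disk, for every `c₁ < 1/4` there exist `c₀` and `m₀` such that for all `m ≥ m₀`,
`K_b(m, ν₀) ≥ c₀ + c₁ m²`. -/
theorem stmt_9 (lam : ℝ) (hlam : 0 < lam) :
    ∀ c₁ : ℝ, c₁ < 1 / 4 → ∃ c₀ : ℝ, ∃ m₀ : ℕ, ∀ m : ℕ, m₀ ≤ m →
      c₀ + c₁ * (m : ℝ) ^ 2 ≤ Kb lam unifDisk m := by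
  intro c₁ hc₁
  set J₀ := ⌈4 * lam ^ 2⌉₊
  refine ⟨-(J₀ : ℝ) ^ 2, J₀, fun m hm => ?_⟩
  have hs : (Finset.Icc J₀ m).map Nat.castEmbedding ⊆ Finset.Icc (-(m : ℤ)) m := by
    intro j hj
    simp only [Finset.mem_map, Finset.mem_Icc, Nat.castEmbedding_apply] at hj ⊢
    omega
  calc -(J₀ : ℝ) ^ 2 + c₁ * (m : ℝ) ^ 2 ≤ (m : ℝ) ^ 2 / 4 - (J₀ : ℝ) ^ 2 := by
        nlinarith [sq_nonneg (m : ℝ)]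
    _ ≤ ∑ n ∈ Finset.Icc J₀ m, ((n : ℝ) + 1) / 2 := sq_div_four_sub_sq_le_sum_Icc hm
    _ ≤ ∑ n ∈ Finset.Icc J₀ m, ‖fourierBessel lam n 1‖ ^ 2 /
          l2normSq unifDisk (fourierBessel lam n) := by
        refine Finset.sum_le_sum fun n hn => half_succ_le_norm_sq_div_l2normSq hlam n ?_
        have hJ₀ : (J₀ : ℝ) ≤ n := by exact_mod_cast (Finset.mem_Icc.1 hn).1
        linarith [Nat.le_ceil (4 * lam ^ 2)]
    _ = ∑ j ∈ (Finset.Icc J₀ m).map Nat.castEmbedding, ‖fourierBessel lam j 1‖ ^ 2 /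
          l2normSq unifDisk (fourierBessel lam j) := by
        rw [Finset.sum_map]; rfl
    _ ≤ Kb lam unifDisk m := sum_le_Kb hlam.le unifDisk m hs (by simp)
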